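/- arXiv:2003.08911 — 6 statements merged into one kernel-verified Lean document; each statement's English description precedes it below -/
import Mathlib

section
/- Let L be a linear subspace of ℝ^n and L^⊥ its orthogonal complement. Then the maximum support index sets cover all indices: J(L) ∪ J(L^⊥) = {1,...,n}. That is, for every index j ∈ {1,...,n}, either some x ∈ L ∩ ℝ^n_+ has x_j > 0 or some s ∈ L^⊥ ∩ ℝ^n_+ has s_j > 0. -/
/-!
If `j ∉ J(L)`, then `-eⱼ` does not lie in the cone `L + ℝⁿ₊`. This cone is finitely generated,
hence closed: by Carathéodory's theorem for cones it is a finite union of cones spanned by linearly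
independent vectors, each a linear image of an orthant. Farkas' lemma therefore separates `-eⱼ`
from it by a linear functional, whose coefficient vector lies in `L^⊥ ∩ ℝⁿ₊` and has positive
`j`-th entry.
-/

noncomputable section

/-- The maximum support index set `J(S)` of a set `S ⊆ ℝⁿ`:
indices `j` such that `x_j > 0` for some nonnegative `x ∈ S`. -/
def maxSupport {n : ℕ} (S : Set (Fin n → ℝ)) : Set (Fin n) :=
  {j | ∃ x ∈ S, (∀ k, 0 ≤ x k) ∧ 0 < x j}

/-- The orthogonal complement `L^⊥ = {s : ⟨s,x⟩ = 0 for all x ∈ L}`. -/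
def perpSet {n : ℕ} (L : Set (Fin n → ℝ)) : Set (Fin n → ℝ) :=
  {s | ∀ x ∈ L, ∑ j, s j * x j = 0}

open Set Finset Topology

namespace PointedCone

section Caratheodory

variable {𝕜 E : Type*} [Field 𝕜] [LinearOrder 𝕜] [IsStrictOrderedRing 𝕜]
  [AddCommGroup E] [Module 𝕜 E] {s : Finset E} {x : E}

lemma mem_hull_finset :
    x ∈ hull 𝕜 (s : Set E) ↔ ∃ c : E → 𝕜, (∀ y ∈ s, 0 ≤ c y) ∧ ∑ y ∈ s, c y • y = x := by
  constructor
  · intro hx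
    obtain ⟨f, -, rfl⟩ := Submodule.mem_span_finset.mp hx
    exact ⟨fun y => f y, fun y _ => (f y).2, rfl⟩
  · rintro ⟨c, hc, rfl⟩
    exact Submodule.sum_mem _ fun y hy => smul_mem _ (hc y hy) (subset_hull hy)

lemma exists_mem_hull_erase [DecidableEq E] (h : ¬LinearIndepOn 𝕜 id (s : Set E))
    (hx : x ∈ hull 𝕜 (s : Set E)) : ∃ y ∈ s, x ∈ hull 𝕜 (s.erase y : Set E) := by
  obtain ⟨c, hc, rfl⟩ := mem_hull_finset.mp hx
  obtain ⟨g, hg, hpos⟩ : ∃ g : E → 𝕜, ∑ y ∈ s, g y • y = 0 ∧ ∃ y ∈ s, 0 < g y := by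
    obtain ⟨g, hg, y, hy, hgy⟩ := not_linearIndepOn_finset_iff.mp h
    rcases hgy.lt_or_gt with hneg | hpos
    · exact ⟨-g, by simpa [neg_smul] using hg, y, hy, neg_pos.mpr hneg⟩
    · exact ⟨g, by simpa using hg, y, hy, hpos⟩
  obtain ⟨y₀, hy₀, hmin⟩ :=
    (s.filter (0 < g ·)).exists_min_image (fun y => c y / g y) (by simpa [Finset.Nonempty])
  rw [mem_filter] at hy₀
  -- shift `c` along the relation `g` until the coefficient of `y₀` vanishes
  set t := c y₀ / g y₀
  refine ⟨y₀, hy₀.1, mem_hull_finset.mpr ⟨fun y => c y - t * g y, fun y hy => ?_, ?_⟩⟩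
  · have hys := mem_of_mem_erase hy
    rw [sub_nonneg]
    by_cases hgy : 0 < g y
    · exact (le_div_iff₀ hgy).mp (hmin y (mem_filter.mpr ⟨hys, hgy⟩))
    · exact (mul_nonpos_of_nonneg_of_nonpos (div_nonneg (hc y₀ hy₀.1) hy₀.2.le)
        (not_lt.mp hgy)).trans (hc y hys)
  · calc ∑ y ∈ s.erase y₀, (c y - t * g y) • y = ∑ y ∈ s, (c y - t * g y) • y :=
          sum_erase _ (by simp [t, hy₀.2.ne'])
      _ = ∑ y ∈ s, c y • y := by
          simp only [sub_smul, mul_smul, sum_sub_distrib, ← smul_sum, hg, smul_zero, sub_zero]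

theorem exists_linearIndepOn_of_mem_hull (hx : x ∈ hull 𝕜 (s : Set E)) :
    ∃ t ⊆ s, LinearIndepOn 𝕜 id (t : Set E) ∧ x ∈ hull 𝕜 (t : Set E) := by
  classical
  induction s using Finset.strongInduction with
  | H s ih =>
    by_cases h : LinearIndepOn 𝕜 id (s : Set E)
    · exact ⟨s, subset_rfl, h, hx⟩
    obtain ⟨y, hy, hxy⟩ := exists_mem_hull_erase h hx
    obtain ⟨t, hts, ht, hxt⟩ := ih _ (erase_ssubset hy) hxy
    exact ⟨t, hts.trans (erase_subset _ _), ht, hxt⟩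

end Caratheodory

section Topology

variable {E : Type*} [AddCommGroup E] [Module ℝ E] [TopologicalSpace E] [IsTopologicalAddGroup E]
  [ContinuousSMul ℝ E] [T2Space E]

lemma isClosed_hull_of_linearIndepOn {s : Finset E} (hs : LinearIndepOn ℝ id (s : Set E)) :
    IsClosed (hull ℝ (s : Set E) : Set E) := by
  set φ := Fintype.linearCombination ℝ (fun y : s => (y : E))
  have hφ : IsClosedEmbedding φ := LinearMap.isClosedEmbedding_of_injective
    (LinearMap.ker_eq_bot.mpr (linearIndependent_iff_injective_fintypeLinearCombination.mp hs))
  convert hφ.isClosedMap _ (isClosed_Ici (a := (0 : s → ℝ)))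
  ext x
  constructor
  · intro hx
    obtain ⟨c, hc, rfl⟩ := mem_hull_finset.mp hx
    exact ⟨fun y => c y, fun y => hc y y.2, by
      simp [φ, Fintype.linearCombination_apply, sum_attach s (fun y => c y • y)]⟩
  · rintro ⟨c, hc, rfl⟩
    exact Submodule.sum_mem _ fun y _ => smul_mem _ (hc y) (subset_hull y.2)

theorem isClosed_of_fg {C : PointedCone ℝ E} (hC : C.FG) : IsClosed (C : Set E) := by
  classical
  obtain ⟨s, rfl⟩ := hC
  have hunion : (hull ℝ (s : Set E) : Set E) =
      ⋃ (t : Finset E) (_ : t ∈ s.powerset.filter (LinearIndepOn ℝ id <| SetLike.coe ·)),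
        (hull ℝ (t : Set E) : Set E) := by
    ext x
    simp only [Set.mem_iUnion, Finset.mem_filter, Finset.mem_powerset, SetLike.mem_coe,
      exists_prop]
    constructor
    · intro hx
      obtain ⟨t, hts, ht, hxt⟩ := exists_linearIndepOn_of_mem_hull hx
      exact ⟨t, ⟨hts, ht⟩, hxt⟩
    · rintro ⟨t, ⟨hts, -⟩, hxt⟩
      exact Submodule.span_mono (by exact_mod_cast hts) hxt
  rw [hunion]
  exact isClosed_biUnion_finset fun t ht => isClosed_hull_of_linearIndepOn (mem_filter.mp ht).2

end Topology

section Generators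

variable {𝕜 E : Type*} [Field 𝕜] [LinearOrder 𝕜] [IsStrictOrderedRing 𝕜]
  [AddCommGroup E] [Module 𝕜 E]

lemma ofSubmodule_span_eq_hull_union_neg (s : Set E) :
    (Submodule.span 𝕜 s : PointedCone 𝕜 E) = hull 𝕜 (s ∪ -s) := by
  refine le_antisymm (gc_ofSubmodule_lineal.l_le (Submodule.span_le.mpr fun y hy => ?_))
    (Submodule.span_le.mpr ?_)
  · exact ⟨subset_hull (Or.inl hy), subset_hull (Or.inr (by simpa using hy))⟩
  · rintro y (hy | hy)
    · exact Submodule.subset_span hy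
    · simpa using (Submodule.span 𝕜 s).neg_mem (Submodule.subset_span hy)

lemma fg_ofSubmodule {S : Submodule 𝕜 E} (hS : S.FG) : (S : PointedCone 𝕜 E).FG := by
  obtain ⟨s, rfl⟩ := hS
  rw [ofSubmodule_span_eq_hull_union_neg]
  exact Submodule.fg_span (s.finite_toSet.union s.finite_toSet.neg)

lemma positive_eq_hull_single {ι : Type*} [Fintype ι] [DecidableEq ι] :
    positive 𝕜 (ι → 𝕜) = hull 𝕜 (range fun i => Pi.single i 1) := by
  refine le_antisymm (fun x hx => ?_) (Submodule.span_le.mpr ?_)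
  · rw [pi_eq_sum_univ' x]
    exact Submodule.sum_mem _ fun i _ => smul_mem _ (hx i) (subset_hull (mem_range_self i))
  · rintro _ ⟨i, rfl⟩
    exact Pi.single_nonneg.mpr zero_le_one

end Generators

end PointedCone

lemma LinearMap.apply_eq_sum_map_single_mul {ι R : Type*} [Fintype ι] [DecidableEq ι]
    [CommSemiring R] (f : (ι → R) →ₗ[R] R) (x : ι → R) : f x = ∑ i, f (Pi.single i 1) * x i := by
  conv_lhs => rw [pi_eq_sum_univ' x]
  simp [mul_comm]

namespace Submodule

variable {ι : Type*} [Fintype ι] (L : Submodule ℝ (ι → ℝ))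

def addOrthant : ProperCone ℝ (ι → ℝ) :=
  ⟨(L : PointedCone ℝ (ι → ℝ)) ⊔ PointedCone.positive ℝ (ι → ℝ),
    PointedCone.isClosed_of_fg <| (PointedCone.fg_ofSubmodule (IsNoetherian.noetherian L)).sup <| by
      classical
      rw [PointedCone.positive_eq_hull_single]
      exact fg_span (finite_range _)⟩

variable {L} in
lemma mem_addOrthant {x : ι → ℝ} : x ∈ L.addOrthant ↔ ∃ y ∈ L, ∃ z, 0 ≤ z ∧ y + z = x :=
  mem_sup

lemma mem_addOrthant_of_mem {x : ι → ℝ} (hx : x ∈ L) : x ∈ L.addOrthant :=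
  mem_addOrthant.mpr ⟨x, hx, 0, le_rfl, add_zero x⟩

lemma mem_addOrthant_of_nonneg {x : ι → ℝ} (hx : 0 ≤ x) : x ∈ L.addOrthant :=
  mem_addOrthant.mpr ⟨0, L.zero_mem, x, hx, zero_add x⟩

end Submodule

lemma neg_single_notMem_addOrthant {n : ℕ} {L : Submodule ℝ (Fin n → ℝ)} {j : Fin n}
    (hj : j ∉ maxSupport (L : Set (Fin n → ℝ))) : -Pi.single j 1 ∉ L.addOrthant := by
  rw [Submodule.mem_addOrthant]
  rintro ⟨y, hy, z, hz, hyz⟩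
  have hy' : -y = z + Pi.single j 1 := by linear_combination -hyz
  have he : (0 : Fin n → ℝ) ≤ Pi.single j 1 := Pi.single_nonneg.mpr zero_le_one
  refine hj ⟨-y, L.neg_mem hy, fun k => (hy' ▸ add_nonneg hz he :) k, ?_⟩
  rw [hy', Pi.add_apply, Pi.single_eq_same]
  exact add_pos_of_nonneg_of_pos (hz j) one_pos

/-- The maximum support index sets of `L` and `L^⊥` cover all indices. -/
theorem maxSupport_union_maxSupport_perp_eq_univ {n : ℕ}
    (L : Submodule ℝ (Fin n → ℝ)) :
    maxSupport (L : Set (Fin n → ℝ)) ∪ maxSupport (perpSet (L : Set (Fin n → ℝ))) = Set.univ := by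
  refine Set.eq_univ_of_forall fun j => or_iff_not_imp_left.mpr fun hj => ?_
  obtain ⟨f, hfK, hfj⟩ :=
    L.addOrthant.hyperplane_separation_point (neg_single_notMem_addOrthant hj)
  have hf (x : Fin n → ℝ) : f x = ∑ k, f (Pi.single k 1) * x k :=
    (f : (Fin n → ℝ) →ₗ[ℝ] ℝ).apply_eq_sum_map_single_mul x
  refine ⟨fun k => f (Pi.single k 1), fun x hx => ?_,
    fun k => hfK _ (L.mem_addOrthant_of_nonneg (Pi.single_nonneg.mpr zero_le_one)),
    by simpa using hfj⟩
  rw [← hf]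
  have hfL {y} (hy : y ∈ L) : 0 ≤ f y := hfK y (L.mem_addOrthant_of_mem hy)
  exact le_antisymm (by simpa using hfL (L.neg_mem hx)) (hfL hx)
end
end

section
/- Let L ⊆ ℝ^n be a linear subspace and P : ℝ^n → L the orthogonal projection onto L. Suppose z ∈ ℝ^n_+ \ {0} and i ∈ {1,...,n} are such that ‖(Pz)^+‖₁ ≤ (1/2)‖z‖_∞ and ‖z‖_∞ = z_i. Then every x ∈ L ∩ ℝ^n_+ satisfies x_i ≤ ‖x‖_∞ / 2. -/
/-!
For `x ∈ L ∩ ℝⁿ₊`, since `z - Pz ⊥ L`, `z_i x_i ≤ ⟪z, x⟫ = ⟪Pz, x⟫ ≤ ‖(Pz)⁺‖₁ ‖x‖_∞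
≤ (1/2) z_i ‖x‖_∞`, and `z_i = ‖z‖_∞ > 0` may be cancelled.
-/

open scoped RealInnerProductSpace

noncomputable section

/-- The ℓ∞ norm of a vector in ℝⁿ. -/
def linf {n : ℕ} (x : EuclideanSpace ℝ (Fin n)) : ℝ := ⨆ j, |x j|

/-- The ℓ₁ norm of the componentwise positive part `v⁺` of a vector `v ∈ ℝⁿ`. -/
def l1pos {n : ℕ} (v : EuclideanSpace ℝ (Fin n)) : ℝ := ∑ j, max (v j) 0

section

variable {n : ℕ}

lemma abs_le_linf (x : EuclideanSpace ℝ (Fin n)) (j : Fin n) : |x j| ≤ linf x :=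
  le_ciSup (f := fun j => |x j|) (Set.finite_range _).bddAbove j

lemma le_linf (x : EuclideanSpace ℝ (Fin n)) (j : Fin n) : x j ≤ linf x :=
  (le_abs_self _).trans (abs_le_linf x j)

lemma linf_pos {x : EuclideanSpace ℝ (Fin n)} (hx : x ≠ 0) : 0 < linf x := by
  obtain ⟨j, hj⟩ : ∃ j, x j ≠ 0 := by
    by_contra! h
    exact hx (by ext j; simp [h j])
  exact (abs_pos.mpr hj).trans_le (abs_le_linf x j)

lemma mul_apply_le_inner_of_nonneg {z x : EuclideanSpace ℝ (Fin n)} (hz : ∀ j, 0 ≤ z j)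
    (hx : ∀ j, 0 ≤ x j) (i : Fin n) : z i * x i ≤ ⟪z, x⟫ := by
  rw [PiLp.inner_apply]
  simpa only [RCLike.inner_apply, conj_trivial, mul_comm] using
    Finset.single_le_sum (f := fun j => ⟪z j, x j⟫) (fun j _ => mul_nonneg (hx j) (hz j))
      (Finset.mem_univ i)

lemma inner_le_l1pos_mul_linf (v : EuclideanSpace ℝ (Fin n)) {x : EuclideanSpace ℝ (Fin n)}
    (hx : ∀ j, 0 ≤ x j) : ⟪v, x⟫ ≤ l1pos v * linf x := by
  rw [PiLp.inner_apply, l1pos, Finset.sum_mul]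
  refine Finset.sum_le_sum fun j _ => ?_
  calc ⟪v j, x j⟫ = v j * x j := by simp [mul_comm]
    _ ≤ max (v j) 0 * x j := mul_le_mul_of_nonneg_right (le_max_left _ _) (hx j)
    _ ≤ max (v j) 0 * linf x := mul_le_mul_of_nonneg_left (le_linf x j) (le_max_right _ _)

end

/-- If `z ∈ ℝⁿ₊ \ {0}` satisfies `‖(Pz)⁺‖₁ ≤ (1/2)‖z‖_∞ = (1/2) z_i`, where `P` is the
orthogonal projection onto the subspace `L`, then every `x ∈ L ∩ ℝⁿ₊` has `x_i ≤ ‖x‖_∞ / 2`. -/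
theorem rescaling_cut {n : ℕ} (L : Submodule ℝ (EuclideanSpace ℝ (Fin n)))
    (z : EuclideanSpace ℝ (Fin n)) (hz0 : ∀ j, 0 ≤ z j) (hzne : z ≠ 0)
    (i : Fin n) (hzi : linf z = z i)
    (hPz : l1pos ((Submodule.orthogonalProjectionOnto L z : L) : EuclideanSpace ℝ (Fin n))
      ≤ (1 / 2) * linf z)
    (x : EuclideanSpace ℝ (Fin n)) (hxL : x ∈ L) (hx0 : ∀ j, 0 ≤ x j) :
    x i ≤ linf x / 2 := by
  have hzi_pos : 0 < z i := hzi ▸ linf_pos hzne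
  have hx_linf : 0 ≤ linf x := (hx0 i).trans (le_linf x i)
  have key : z i * x i ≤ z i * (linf x / 2) :=
    calc z i * x i ≤ ⟪z, x⟫ := mul_apply_le_inner_of_nonneg hz0 hx0 i
      _ = ⟪(L.orthogonalProjectionOnto z : EuclideanSpace ℝ (Fin n)), x⟫ :=
        (L.inner_orthogonalProjectionOnto_eq_of_mem_right ⟨x, hxL⟩ z).symm
      _ ≤ l1pos (L.orthogonalProjectionOnto z : EuclideanSpace ℝ (Fin n)) * linf x :=
        inner_le_l1pos_mul_linf _ hx0
      _ ≤ (1 / 2) * linf z * linf x := mul_le_mul_of_nonneg_right hPz hx_linf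
      _ = z i * (linf x / 2) := by rw [hzi]; ring
  exact le_of_mul_le_mul_left key hzi_pos

end
end

section
/- Let L be a linear subspace of ℝ^n and L^⊥ its orthogonal complement. Suppose J, Ĵ ⊆ {1,...,n} satisfy J ⊆ J(L), Ĵ ⊆ J(L^⊥), and J ∪ Ĵ = {1,...,n}. Then J = J(L) and Ĵ = J(L^⊥). -/
noncomputable section

lemma maxSupport_disjoint {n : ℕ} (L : Set (Fin n → ℝ)) (j : Fin n)
    (h1 : j ∈ maxSupport L) (h2 : j ∈ maxSupport (perpSet L)) : False := by
  obtain ⟨x, hxL, hxnn, hxj⟩ := h1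
  obtain ⟨s, hsP, hsnn, hsj⟩ := h2
  have hzero : ∑ k, s k * x k = 0 := hsP x hxL
  have hpos : 0 < ∑ k, s k * x k := by
    apply Finset.sum_pos' (fun k _ => mul_nonneg (hsnn k) (hxnn k))
    exact ⟨j, Finset.mem_univ j, mul_pos hsj hxj⟩
  linarith

/-- If `J ⊆ J(L)`, `Ĵ ⊆ J(L^⊥)` and `J ∪ Ĵ = {1,…,n}`, then
`J = J(L)` and `Ĵ = J(L^⊥)`. -/
theorem support_cover_forces_eq {n : ℕ} (L : Submodule ℝ (Fin n → ℝ))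
    (J Jhat : Set (Fin n))
    (hJ : J ⊆ maxSupport (L : Set (Fin n → ℝ)))
    (hJhat : Jhat ⊆ maxSupport (perpSet (L : Set (Fin n → ℝ))))
    (hcover : J ∪ Jhat = Set.univ) :
    J = maxSupport (L : Set (Fin n → ℝ)) ∧
      Jhat = maxSupport (perpSet (L : Set (Fin n → ℝ))) := by
  constructor
  · apply Set.Subset.antisymm hJ
    intro j hj
    have : j ∈ J ∪ Jhat := hcover ▸ Set.mem_univ j
    rcases this with h | h
    · exact h
    · exact absurd (maxSupport_disjoint _ j hj (hJhat h)) not_false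
  · apply Set.Subset.antisymm hJhat
    intro j hj
    have : j ∈ J ∪ Jhat := hcover ▸ Set.mem_univ j
    rcases this with h | h
    · exact absurd (maxSupport_disjoint _ j (hJ h) hj) not_false
    · exact h

end
end

section
/- Let A = [a_1 ⋯ a_n] ∈ ℝ^{m×n} be a full row-rank matrix whose columns all have Euclidean norm one, and let L = {x ∈ ℝ^n : Ax = 0}. Then ρ(A) < 0 if and only if L ∩ ℝ^n_{++} ≠ ∅. -/
noncomputable section

/-- The Euclidean norm of a vector in ℝᵐ. -/
def eNorm {m : ℕ} (y : Fin m → ℝ) : ℝ := Real.sqrt (∑ k, y k ^ 2)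

/-- The condition measure `ρ(A) := max_{‖y‖₂ = 1} min_{i} ⟨a_i, y⟩`,
where `a_1, …, a_n` are the columns of `A`. -/
def rho {m n : ℕ} (A : Matrix (Fin m) (Fin n) ℝ) : ℝ :=
  sSup {t | ∃ y : Fin m → ℝ, eNorm y = 1 ∧ t = ⨅ i, ∑ k, A k i * y k}

/-! ### Auxiliary lemmas -/

open Matrix

lemma eNorm_sq_eq_one {m : ℕ} {y : Fin m → ℝ} (h : eNorm y = 1) :
    ∑ k, y k ^ 2 = 1 := by
  have h0 : (0:ℝ) ≤ ∑ k, y k ^ 2 := Finset.sum_nonneg fun k _ => sq_nonneg _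
  have := Real.sq_sqrt h0
  rw [eNorm] at h
  rw [h] at this
  simpa using this.symm

lemma eNorm_zero_iff {m : ℕ} {y : Fin m → ℝ} : eNorm y = 0 ↔ y = 0 := by
  have h0 : (0:ℝ) ≤ ∑ k, y k ^ 2 := Finset.sum_nonneg fun k _ => sq_nonneg _
  constructor
  · intro h
    rw [eNorm, Real.sqrt_eq_zero h0] at h
    have := (Finset.sum_eq_zero_iff_of_nonneg (fun k _ => sq_nonneg (y k))).1 h
    funext k
    have := this k (Finset.mem_univ k)
    exact pow_eq_zero_iff two_ne_zero |>.1 this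
  · rintro rfl
    simp [eNorm]

lemma abs_le_one_of_unit {m : ℕ} {y : Fin m → ℝ} (h : eNorm y = 1) (k : Fin m) :
    |y k| ≤ 1 := by
  have hs := eNorm_sq_eq_one h
  have h1 : y k ^ 2 ≤ 1 := by
    have h2 := Finset.single_le_sum (f := fun j => y j ^ 2)
      (fun j _ => sq_nonneg (y j)) (Finset.mem_univ k)
    linarith
  have := abs_nonneg (y k)
  nlinarith [sq_abs (y k)]

lemma eNorm_smul {m : ℕ} (r : ℝ) (y : Fin m → ℝ) :
    eNorm (r • y) = |r| * eNorm y := by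
  simp only [eNorm, Pi.smul_apply, smul_eq_mul, mul_pow, ← Finset.mul_sum]
  rw [Real.sqrt_mul (sq_nonneg r), Real.sqrt_sq_eq_abs]

/-- Interchange of summation: `⟨Aᵀy, x⟩ = ⟨y, Ax⟩`. -/
lemma dot_shift {m n : ℕ} (A : Matrix (Fin m) (Fin n) ℝ) (x : Fin n → ℝ)
    (y : Fin m → ℝ) :
    ∑ i, (∑ k, A k i * y k) * x i = ∑ k, y k * (A.mulVec x) k := by
  simp only [Matrix.mulVec, dotProduct, Finset.sum_mul, Finset.mul_sum]
  rw [Finset.sum_comm]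
  exact Finset.sum_congr rfl fun k _ => Finset.sum_congr rfl fun i _ => by ring

/-- Full row rank implies `Aᵀ` has trivial kernel. -/
lemma transpose_mulVec_eq_zero {m n : ℕ} {A : Matrix (Fin m) (Fin n) ℝ}
    (hrank : A.rank = m) {y : Fin m → ℝ} (h : Aᵀ.mulVec y = 0) : y = 0 := by
  have h1 : Aᵀ.rank = m := by rw [Matrix.rank_transpose, hrank]
  have h2 := LinearMap.finrank_range_add_finrank_ker (Aᵀ.mulVecLin)
  rw [Module.finrank_fin_fun] at h2
  have h3 : Module.finrank ℝ (LinearMap.range Aᵀ.mulVecLin) = m := h1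
  have h4 : Module.finrank ℝ (LinearMap.ker Aᵀ.mulVecLin) = 0 := by omega
  have h5 : LinearMap.ker Aᵀ.mulVecLin = ⊥ := Submodule.finrank_eq_zero.1 h4
  have hy : y ∈ LinearMap.ker Aᵀ.mulVecLin := by
    rw [LinearMap.mem_ker, Matrix.mulVecLin_apply]; exact h
  rw [h5] at hy
  simpa using hy

/-- Full row rank implies `A Aᵀ` is surjective. -/
lemma AAt_surjective {m n : ℕ} {A : Matrix (Fin m) (Fin n) ℝ}
    (hrank : A.rank = m) (v : Fin m → ℝ) :
    ∃ y : Fin m → ℝ, A.mulVec (Aᵀ.mulVec y) = v := by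
  have h1 : (A * Aᵀ).rank = m := by rw [Matrix.rank_self_mul_transpose, hrank]
  have h2 : LinearMap.range (A * Aᵀ).mulVecLin = ⊤ := by
    apply Submodule.eq_top_of_finrank_eq
    rw [Module.finrank_fin_fun]
    exact h1
  have hv : v ∈ LinearMap.range (A * Aᵀ).mulVecLin := by rw [h2]; trivial
  obtain ⟨y, hy⟩ := hv
  refine ⟨y, ?_⟩
  rw [Matrix.mulVec_mulVec]
  rw [Matrix.mulVecLin_apply] at hy
  exact hy

/-- If `Ax = 0` with `x > 0`, then for every unit vector `y` some column
has negative inner product with `y`. -/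
lemma exists_neg_col {m n : ℕ} {A : Matrix (Fin m) (Fin n) ℝ}
    (hrank : A.rank = m) {x : Fin n → ℝ} (hx : A.mulVec x = 0)
    (hxpos : ∀ j, 0 < x j) {y : Fin m → ℝ} (hy : eNorm y = 1) :
    ∃ i, ∑ k, A k i * y k < 0 := by
  by_contra hcon
  push_neg at hcon
  have hsum : ∑ i, (∑ k, A k i * y k) * x i = 0 := by
    rw [dot_shift A x y, hx]; simp
  have hterm : ∀ i ∈ Finset.univ, (∑ k, A k i * y k) * x i = 0 :=
    (Finset.sum_eq_zero_iff_of_nonneg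
      (fun i _ => mul_nonneg (hcon i) (hxpos i).le)).1 hsum
  have hAty : Aᵀ.mulVec y = 0 := by
    funext i
    have := hterm i (Finset.mem_univ i)
    have hxi := (hxpos i).ne'
    simp only [Matrix.mulVec, dotProduct, Matrix.transpose_apply, Pi.zero_apply]
    rcases mul_eq_zero.1 this with h | h
    · exact h
    · exact absurd h hxi
  have := transpose_mulVec_eq_zero hrank hAty
  rw [this] at hy
  rw [eNorm_zero_iff.2 rfl] at hy
  norm_num at hy

lemma bddAbove_rho_set {m n : ℕ} (hn : 0 < n) (A : Matrix (Fin m) (Fin n) ℝ)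
    (hcols : ∀ i, eNorm (fun k => A k i) = 1) :
    BddAbove {t | ∃ y : Fin m → ℝ, eNorm y = 1 ∧ t = ⨅ i, ∑ k, A k i * y k} := by
  haveI : Nonempty (Fin n) := ⟨⟨0, hn⟩⟩
  refine ⟨(m : ℝ), ?_⟩
  rintro t ⟨y, hy, rfl⟩
  set i0 : Fin n := ⟨0, hn⟩
  have hb : BddBelow (Set.range fun i => ∑ k, A k i * y k) :=
    (Set.finite_range _).bddBelow
  refine le_trans (ciInf_le hb i0) ?_
  calc ∑ k, A k i0 * y k ≤ ∑ k : Fin m, (1:ℝ) := by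
        apply Finset.sum_le_sum
        intro k _
        have h1 : |A k i0| ≤ 1 := abs_le_one_of_unit (hcols i0) k
        have h2 : |y k| ≤ 1 := abs_le_one_of_unit hy k
        calc A k i0 * y k ≤ |A k i0 * y k| := le_abs_self _
          _ = |A k i0| * |y k| := abs_mul _ _
          _ ≤ 1 := mul_le_one₀ h1 (abs_nonneg _) h2
    _ = (m : ℝ) := by simp

/-- Direction: existence of a positive kernel vector implies `ρ(A) < 0`. -/
lemma rho_lt_zero_of_pos_ker {m n : ℕ} (hn : 0 < n) (A : Matrix (Fin m) (Fin n) ℝ)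
    (hrank : A.rank = m) (hcols : ∀ i, eNorm (fun k => A k i) = 1)
    {x : Fin n → ℝ} (hx : A.mulVec x = 0) (hxpos : ∀ j, 0 < x j) :
    rho A < 0 := by
  haveI : Nonempty (Fin n) := ⟨⟨0, hn⟩⟩
  have hm : 0 < m := by
    rcases Nat.eq_zero_or_pos m with h | h
    · subst h
      have := hcols ⟨0, hn⟩
      simp [eNorm] at this
    · exact h
  haveI : Nonempty (Fin m) := ⟨⟨0, hm⟩⟩
  set K : Set (Fin m → ℝ) := {y | eNorm y = 1} with hK
  set g : (Fin m → ℝ) → ℝ := fun y => ⨅ i, ∑ k, A k i * y k with hg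
  have hgcont : Continuous g := by
    have hge : g = fun y => Finset.univ.inf' Finset.univ_nonempty
        (fun i => (fun i (y : Fin m → ℝ) => ∑ k, A k i * y k) i y) := by
      funext y
      rw [Finset.inf'_univ_eq_ciInf]
    rw [hge]
    exact Continuous.finset_inf'_apply Finset.univ_nonempty
      (fun i _ => continuous_finset_sum _ fun k _ =>
        continuous_const.mul (continuous_apply k))
  have hKcomp : IsCompact K := by
    have hc : Continuous (eNorm : (Fin m → ℝ) → ℝ) :=
      Real.continuous_sqrt.comp
        (continuous_finset_sum _ fun k _ => (continuous_apply k).pow 2)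
    have hcl : IsClosed K := isClosed_eq hc continuous_const
    apply IsCompact.of_isClosed_subset (isCompact_closedBall (0 : Fin m → ℝ) 1) hcl
    intro y hy
    rw [Metric.mem_closedBall, dist_zero_right]
    rw [pi_norm_le_iff_of_nonneg zero_le_one]
    intro k
    simpa [Real.norm_eq_abs] using abs_le_one_of_unit hy k
  have hS : {t | ∃ y, eNorm y = 1 ∧ t = ⨅ i, ∑ k, A k i * y k} = g '' K := by
    ext t
    constructor
    · rintro ⟨y, h1, rfl⟩; exact ⟨y, h1, rfl⟩
    · rintro ⟨y, h1, rfl⟩; exact ⟨y, h1, rfl⟩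
  have hSne : (g '' K).Nonempty := by
    set y0 : Fin m → ℝ := Pi.single (⟨0, hm⟩ : Fin m) (1:ℝ) with hy0
    refine ⟨g y0, ⟨y0, ?_, rfl⟩⟩
    show eNorm _ = 1
    rw [eNorm]
    have h1 : ∑ k, y0 k ^ 2 = 1 := by
      simp [hy0, Pi.single_apply, ite_pow]
    rw [h1, Real.sqrt_one]
  rw [rho, hS]
  obtain ⟨y, hyK, hgy⟩ := (hKcomp.image hgcont).sSup_mem hSne
  rw [← hgy]
  obtain ⟨i, hi⟩ := exists_neg_col hrank hx hxpos hyK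
  calc g y ≤ ∑ k, A k i * y k := ciInf_le ((Set.finite_range _).bddBelow) i
    _ < 0 := hi

/-- Direction: if no positive kernel vector exists, then `ρ(A) ≥ 0`. -/
lemma rho_nonneg_of_no_pos_ker {m n : ℕ} (hn : 0 < n) (A : Matrix (Fin m) (Fin n) ℝ)
    (hrank : A.rank = m) (hcols : ∀ i, eNorm (fun k => A k i) = 1)
    (hno : ¬∃ x : Fin n → ℝ, A.mulVec x = 0 ∧ ∀ j, 0 < x j) :
    0 ≤ rho A := by
  haveI : Nonempty (Fin n) := ⟨⟨0, hn⟩⟩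
  set s : Set (Fin n → ℝ) := {x | ∀ j, 0 < x j} with hs
  set t : Set (Fin n → ℝ) := {x | A.mulVec x = 0} with ht
  have hspi : s = Set.pi Set.univ (fun _ : Fin n => Set.Ioi (0:ℝ)) := by
    ext x; simp [hs, Set.mem_pi]
  have hsconv : Convex ℝ s := by
    rw [hspi]; exact convex_pi fun i _ => convex_Ioi 0
  have hsopen : IsOpen s := by
    rw [hspi]; exact isOpen_set_pi Set.finite_univ fun i _ => isOpen_Ioi
  have htconv : Convex ℝ t := by
    intro a ha b hb p q hp hq hpq
    simp only [ht, Set.mem_setOf_eq] at ha hb ⊢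
    rw [Matrix.mulVec_add, Matrix.mulVec_smul, Matrix.mulVec_smul, ha, hb]
    simp
  have hdisj : Disjoint s t := by
    rw [Set.disjoint_left]
    intro x hxs hxt
    exact hno ⟨x, hxt, hxs⟩
  obtain ⟨f, u, hf1, hf2⟩ := geometric_hahn_banach_open hsconv hsopen htconv hdisj
  have hu0 : u ≤ 0 := by
    have h0t : (0 : Fin n → ℝ) ∈ t := by simp [ht]
    simpa using hf2 0 h0t
  have hker : ∀ b ∈ t, f b = 0 := by
    intro b hb
    by_contra hfb
    have hbt : ((u - 1) / f b) • b ∈ t := by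
      simp only [ht, Set.mem_setOf_eq] at hb ⊢
      rw [Matrix.mulVec_smul, hb]
      simp
    have h2 := hf2 _ hbt
    rw [_root_.map_smul, smul_eq_mul, div_mul_cancel₀ _ hfb] at h2
    linarith
  set c : Fin n → ℝ := fun i => f (fun j => if i = j then 1 else 0) with hc
  have frep : ∀ x : Fin n → ℝ, f x = ∑ i, x i * c i := by
    intro x
    have h1 := LinearMap.pi_apply_eq_sum_univ
      (f.toLinearMap : (Fin n → ℝ) →ₗ[ℝ] ℝ) x
    simpa [smul_eq_mul, hc] using h1
  have hneg : ∀ x : Fin n → ℝ, (∀ j, 0 < x j) → f x < 0 :=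
    fun x hxp => lt_of_lt_of_le (hf1 x hxp) hu0
  have hcle : ∀ i, c i ≤ 0 := by
    intro i
    by_contra hci
    push_neg at hci
    set T : ℝ := ∑ j, |c j| with hT
    have hT0 : 0 ≤ T := Finset.sum_nonneg fun j _ => abs_nonneg _
    set ε : ℝ := c i / (2 * (T + 1)) with he
    have hε : 0 < ε := div_pos hci (by linarith)
    have hxp : ∀ j, 0 < ((fun _ => ε) + Pi.single i 1 : Fin n → ℝ) j := by
      intro j
      simp only [Pi.add_apply, Pi.single_apply]
      by_cases h : j = i <;> simp [h] <;> linarith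
    have hlt := hneg _ hxp
    have heq : f ((fun _ => ε) + Pi.single i 1) = ε * (∑ j, c j) + c i := by
      rw [frep]
      simp only [Pi.add_apply, add_mul, Finset.sum_add_distrib]
      congr 1
      · rw [Finset.mul_sum]
      · simp [Pi.single_apply, ite_mul]
    have habs : |∑ j, c j| ≤ T := by
      rw [hT]; exact Finset.abs_sum_le_sum_abs _ _
    have hεT : ε * (T + 1) = c i / 2 := by
      rw [he]; field_simp
    have h1 : -(ε * T) ≤ ε * (∑ j, c j) := by
      nlinarith [neg_abs_le (∑ j, c j)]
    have h2 : ε * T ≤ c i / 2 := by nlinarith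
    rw [heq] at hlt
    linarith
  have hsum_neg : ∑ j, c j < 0 := by
    have h1 := hneg (fun _ => 1) (fun j => one_pos)
    rw [frep] at h1
    simpa using h1
  have hcex : ∃ i, c i < 0 := by
    by_contra hno2
    push_neg at hno2
    have : ∑ j, c j = 0 := Finset.sum_eq_zero fun j _ => le_antisymm (hcle j) (hno2 j)
    linarith
  set d : Fin n → ℝ := fun i => -c i with hd
  have hd0 : ∀ i, 0 ≤ d i := fun i => neg_nonneg.2 (hcle i)
  obtain ⟨i0, hi0⟩ := hcex
  have hdi0 : 0 < d i0 := by have : d i0 = -c i0 := rfl; linarith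
  have horth : ∀ z ∈ t, ∑ i2, z i2 * d i2 = 0 := by
    intro z hz
    have h1 : f z = 0 := hker z hz
    rw [frep] at h1
    have : ∑ i2, z i2 * d i2 = -(∑ i2, z i2 * c i2) := by
      rw [← Finset.sum_neg_distrib]
      exact Finset.sum_congr rfl fun i2 _ => by simp [hd, mul_neg]
    rw [this, h1, neg_zero]
  obtain ⟨y, hy⟩ := AAt_surjective hrank (A.mulVec d)
  set e : Fin n → ℝ := d - Aᵀ.mulVec y with hedef
  have het : e ∈ t := by
    simp only [ht, Set.mem_setOf_eq, hedef]
    rw [Matrix.mulVec_sub, hy, sub_self]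
  have h1 : ∑ i2, e i2 * d i2 = 0 := horth e het
  have hAe : A.mulVec e = 0 := het
  have h2 : ∑ i2, e i2 * (Aᵀ.mulVec y) i2 = 0 := by
    have h3 := dot_shift A e y
    rw [hAe] at h3
    simp only [Pi.zero_apply, mul_zero, Finset.sum_const_zero] at h3
    rw [← h3]
    exact Finset.sum_congr rfl fun i2 _ => by
      simp [Matrix.mulVec, dotProduct, Matrix.transpose_apply]; ring
  have hsq : ∑ i2, e i2 ^ 2 = 0 := by
    have h4 : ∑ i2, e i2 ^ 2 = ∑ i2, e i2 * d i2 - ∑ i2, e i2 * (Aᵀ.mulVec y) i2 := by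
      rw [← Finset.sum_sub_distrib]
      exact Finset.sum_congr rfl fun i2 _ => by
        have h6 : e i2 = d i2 - (Aᵀ.mulVec y) i2 := by rw [hedef]; simp
        rw [h6]; ring
    rw [h4, h1, h2, sub_zero]
  have he0 : e = 0 := by
    funext i2
    have h5 := (Finset.sum_eq_zero_iff_of_nonneg
      (fun i2 _ => sq_nonneg (e i2))).1 hsq i2 (Finset.mem_univ i2)
    exact pow_eq_zero_iff two_ne_zero |>.1 h5
  have hdA : d = Aᵀ.mulVec y := by
    have h7 : d - Aᵀ.mulVec y = 0 := by rw [← hedef]; exact he0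
    exact sub_eq_zero.1 h7
  have hyne : y ≠ 0 := by
    rintro rfl
    rw [Matrix.mulVec_zero] at hdA
    have := congrFun hdA i0
    simp at this
    linarith
  have hν : 0 < eNorm y := by
    rcases lt_or_eq_of_le (Real.sqrt_nonneg (∑ k, y k ^ 2)) with h | h
    · exact h
    · exact absurd (eNorm_zero_iff.1 h.symm) hyne
  set y' : Fin m → ℝ := (eNorm y)⁻¹ • y with hy'def
  have hy' : eNorm y' = 1 := by
    rw [hy'def, eNorm_smul, abs_inv, abs_of_pos hν, inv_mul_cancel₀ hν.ne']
  have hterm : ∀ i2, 0 ≤ ∑ k, A k i2 * y' k := by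
    intro i2
    have hcomp : ∑ k, A k i2 * y' k = (eNorm y)⁻¹ * d i2 := by
      have hdi : d i2 = ∑ k, A k i2 * y k := by
        rw [hdA]
        simp [Matrix.mulVec, dotProduct, Matrix.transpose_apply]
      rw [hdi, Finset.mul_sum]
      exact Finset.sum_congr rfl fun k _ => by
        rw [hy'def]; simp; ring
    rw [hcomp]
    exact mul_nonneg (inv_nonneg.2 hν.le) (hd0 i2)
  have hmemS : (⨅ i2, ∑ k, A k i2 * y' k) ∈
      {t | ∃ y : Fin m → ℝ, eNorm y = 1 ∧ t = ⨅ i, ∑ k, A k i * y k} :=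
    ⟨y', hy', rfl⟩
  have h0le : (0:ℝ) ≤ ⨅ i2, ∑ k, A k i2 * y' k := le_ciInf hterm
  exact le_trans h0le (le_csSup (bddAbove_rho_set hn A hcols) hmemS)

/-- For a full row-rank matrix `A` with unit columns, `ρ(A) < 0` iff
`L ∩ ℝⁿ₊₊ ≠ ∅`, where `L = {x : Ax = 0}`. -/
theorem rho_neg_iff {m n : ℕ} (hn : 0 < n) (A : Matrix (Fin m) (Fin n) ℝ)
    (hrank : A.rank = m) (hcols : ∀ i, eNorm (fun k => A k i) = 1) :
    rho A < 0 ↔ ∃ x : Fin n → ℝ, A.mulVec x = 0 ∧ ∀ j, 0 < x j := by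
  constructor
  · intro h
    by_contra hno
    exact absurd h (not_lt.2 (rho_nonneg_of_no_pos_ker hn A hrank hcols hno))
  · rintro ⟨x, hx, hxpos⟩
    exact rho_lt_zero_of_pos_ker hn A hrank hcols hx hxpos

end
end

section
/- Let A = [a_1 ⋯ a_n] ∈ ℝ^{m×n} be a matrix whose columns all have Euclidean norm one, and suppose ρ(A) < 0. Then every v ∈ ℝ^m with ‖v‖₂ ≤ |ρ(A)| belongs to the convex hull {Ax : x ∈ Δ_{n-1}} of the columns of A. -/
noncomputable section
open Matrix

/-!
If `v` were outside the convex hull of the columns `a i`, a hyperplane `⟪y, ·⟫` would separate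
it from them: `⟪y, v⟫ < ⟪y, a i⟫` for all `i`. Testing the definition of `ρ(A)` on `y / ‖y‖`
gives a column with `⟪y, a i⟫ ≤ ρ(A) ‖y‖ ≤ -‖v‖ ‖y‖ ≤ ⟪y, v⟫`, a contradiction.
-/

open Set WithLp
open scoped RealInnerProductSpace

theorem convexHull_range_eq_image_stdSimplex {R E ι : Type*} [Field R] [LinearOrder R]
    [IsStrictOrderedRing R] [AddCommGroup E] [Module R E] [Fintype ι] (v : ι → E) :
    convexHull R (range v) = (fun w : ι → R => ∑ i, w i • v i) '' stdSimplex R ι := by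
  classical
  let L : (ι → R) →ₗ[R] E := ∑ i, (LinearMap.proj i).smulRight (v i)
  have hL : ⇑L = fun w => ∑ i, w i • v i := by ext w; simp [L]
  rw [← hL, ← convexHull_basis_eq_stdSimplex, L.image_convexHull, ← range_comp]
  congr 1
  ext i
  simp [hL]

section InnerProductSpace

variable {E : Type*} [NormedAddCommGroup E] [InnerProductSpace ℝ E] [CompleteSpace E]

theorem closedBall_zero_subset_convexHull_of_forall_exists_inner_le {s : Set E} (hs : s.Finite)
    (hne : s.Nonempty) {r : ℝ} (h : ∀ w : E, ‖w‖ = 1 → ∃ a ∈ s, ⟪a, w⟫ ≤ -r) :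
    Metric.closedBall 0 r ⊆ convexHull ℝ s := by
  intro v hv
  rw [mem_closedBall_zero_iff] at hv
  by_contra hout
  obtain ⟨f, u, hfv, hfs⟩ := geometric_hahn_banach_point_closed (convex_convexHull ℝ s)
    (hs.isCompact_convexHull (𝕜 := ℝ)).isClosed hout
  set y := (InnerProductSpace.toDual ℝ E).symm f
  have hf : ∀ x, f x = ⟪y, x⟫ := fun x => (InnerProductSpace.toDual_symm_apply).symm
  have hfs' : ∀ a ∈ s, u < ⟪y, a⟫ := fun a ha => hf a ▸ hfs a (subset_convexHull ℝ s ha)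
  rw [hf] at hfv
  rcases eq_or_ne y 0 with hy | hy
  · obtain ⟨a, ha⟩ := hne
    have hua := hfs' a ha
    simp only [hy, inner_zero_left] at hfv hua
    linarith
  · have hy' : 0 < ‖y‖ := norm_pos_iff.2 hy
    obtain ⟨a, ha, har⟩ := h (‖y‖⁻¹ • y) (norm_smul_inv_norm hy)
    rw [real_inner_smul_right, real_inner_comm, inv_mul_le_iff₀ hy'] at har
    have hCS : -(‖y‖ * ‖v‖) ≤ ⟪y, v⟫ := neg_le_of_abs_le (abs_real_inner_le_norm y v)
    have hlt := calc ⟪y, a⟫ ≤ ‖y‖ * -r := har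
      _ ≤ -(‖y‖ * ‖v‖) := by nlinarith
      _ ≤ ⟪y, v⟫ := hCS
      _ < u := hfv
      _ < ⟪y, a⟫ := hfs' a ha
    exact lt_irrefl _ hlt

end InnerProductSpace

theorem eNorm_eq_norm_toLp {m : ℕ} (y : Fin m → ℝ) : eNorm y = ‖toLp 2 y‖ := by
  simp [eNorm, EuclideanSpace.norm_eq]

theorem sum_mul_eq_inner_toLp {m n : ℕ} (A : Matrix (Fin m) (Fin n) ℝ) (y : Fin m → ℝ)
    (i : Fin n) : ∑ k, A k i * y k = ⟪toLp 2 (Aᵀ i), toLp 2 y⟫ := by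
  simp [EuclideanSpace.inner_toLp_toLp, dotProduct, mul_comm]

theorem iInf_inner_le_rho {m n : ℕ} [NeZero n] (A : Matrix (Fin m) (Fin n) ℝ)
    {w : EuclideanSpace ℝ (Fin m)} (hw : ‖w‖ = 1) : ⨅ i, ⟪toLp 2 (Aᵀ i), w⟫ ≤ rho A := by
  refine le_csSup ⟨‖toLp 2 (Aᵀ 0)‖, ?_⟩ ⟨ofLp w, by simpa [eNorm_eq_norm_toLp] using hw, ?_⟩
  · rintro _ ⟨y, hy, rfl⟩
    simp only [sum_mul_eq_inner_toLp]
    calc ⨅ i, ⟪toLp 2 (Aᵀ i), toLp 2 y⟫ ≤ ⟪toLp 2 (Aᵀ 0), toLp 2 y⟫ :=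
          ciInf_le (finite_range _).bddBelow 0
      _ ≤ ‖toLp 2 (Aᵀ 0)‖ := by
          simpa [← eNorm_eq_norm_toLp, hy] using real_inner_le_norm (toLp 2 (Aᵀ 0)) (toLp 2 y)
  · simp [sum_mul_eq_inner_toLp]

theorem ball_subset_convex_hull_of_rho_neg_general {m n : ℕ} (hn : 0 < n)
    (A : Matrix (Fin m) (Fin n) ℝ)
    (hneg : rho A < 0)
    (v : Fin m → ℝ) (hv : eNorm v ≤ |rho A|) :
    ∃ x : Fin n → ℝ, (∀ j, 0 ≤ x j) ∧ (∑ j, |x j|) = 1 ∧ A.mulVec x = v := by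
  have : NeZero n := ⟨hn.ne'⟩
  set a : Fin n → EuclideanSpace ℝ (Fin m) := fun i => toLp 2 (Aᵀ i)
  have hball : Metric.closedBall 0 (-rho A) ⊆ convexHull ℝ (range a) := by
    refine closedBall_zero_subset_convexHull_of_forall_exists_inner_le (finite_range a)
      (range_nonempty a) fun w hw => ?_
    obtain ⟨i, hi⟩ := exists_eq_ciInf_of_finite (f := fun i => ⟪a i, w⟫)
    exact ⟨a i, mem_range_self i, by rw [neg_neg, hi]; exact iInf_inner_le_rho A hw⟩
  have hvmem : toLp 2 v ∈ convexHull ℝ (range a) := hball <| by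
    rwa [mem_closedBall_zero_iff, ← eNorm_eq_norm_toLp, ← abs_of_neg hneg]
  rw [convexHull_range_eq_image_stdSimplex] at hvmem
  obtain ⟨x, ⟨hx0, hx1⟩, hxv⟩ := hvmem
  refine ⟨x, hx0, by simpa [abs_of_nonneg (hx0 _)] using hx1, ?_⟩
  rw [mulVec_eq_sum]
  simpa [a] using congrArg ofLp hxv

/-- If `A` has unit columns and `ρ(A) < 0`, then every `v ∈ ℝᵐ` with `‖v‖₂ ≤ |ρ(A)|`
lies in the convex hull `{Ax : x ∈ Δ_{n-1}}` of the columns of `A`. -/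
theorem ball_subset_convex_hull_of_rho_neg {m n : ℕ} (hn : 0 < n)
    (A : Matrix (Fin m) (Fin n) ℝ)
    (hcols : ∀ i, eNorm (fun k => A k i) = 1) (hneg : rho A < 0)
    (v : Fin m → ℝ) (hv : eNorm v ≤ |rho A|) :
    ∃ x : Fin n → ℝ, (∀ j, 0 ≤ x j) ∧ (∑ j, |x j|) = 1 ∧ A.mulVec x = v :=
  ball_subset_convex_hull_of_rho_neg_general hn A hneg v hv

end
end

section
/- Let L ⊆ ℝ^n be a linear subspace, P : ℝ^n → L the orthogonal projection onto L, μ > 0, and z, u ∈ Δ_{n-1}. Suppose (1/2)‖Pz‖₂² + (1/2)‖Pu‖₂² − min_{w ∈ Δ_{n-1}} ⟨Pu, w⟩ ≤ μ, and suppose Pu is not componentwise strictly positive. Then ‖(Pz)^+‖₁ ≤ √n · ‖Pz‖₂ ≤ √(2nμ) ≤ n√(2nμ) · ‖z‖_∞. In particular, if μ ≤ 1/(8n³) then ‖(Pz)^+‖₁ ≤ (1/2)‖z‖_∞. -/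
noncomputable section
open scoped RealInnerProductSpace

/-- The ℓ₁ norm of a vector in ℝⁿ. -/
def l1 {n : ℕ} (x : EuclideanSpace ℝ (Fin n)) : ℝ := ∑ j, |x j|

/-- Membership in the standard simplex `Δ_{n-1} = {x ∈ ℝⁿ : x ≥ 0, ‖x‖₁ = 1}`. -/
def inSimplex {n : ℕ} (x : EuclideanSpace ℝ (Fin n)) : Prop :=
  (∀ j, 0 ≤ x j) ∧ l1 x = 1

/-- The orthogonal projection onto `L`, viewed as a map into the ambient space. -/
def proj {n : ℕ} (L : Submodule ℝ (EuclideanSpace ℝ (Fin n)))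
    (x : EuclideanSpace ℝ (Fin n)) : EuclideanSpace ℝ (Fin n) :=
  (L.orthogonalProjection x : EuclideanSpace ℝ (Fin n))

/-! The point `Pu ∉ ℝⁿ₊₊` has a nonpositive coordinate `(Pu)ⱼ = ⟨Pu, eⱼ⟩`, so the minimum of
`⟨Pu, ·⟩` over the simplex is `≤ 0` and the gap bound forces `‖Pz‖₂² ≤ 2μ`. The chain then follows
from `‖v⁺‖₁ ≤ ‖v‖₁ ≤ √n‖v‖₂` and from `‖z‖_∞ ≥ 1/n` for `z` in the simplex. -/

lemma l1pos_le_l1 {n : ℕ} (v : EuclideanSpace ℝ (Fin n)) : l1pos v ≤ l1 v :=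
  Finset.sum_le_sum fun _ _ => max_le (le_abs_self _) (abs_nonneg _)

lemma sq_norm_eq_sum_sq_abs {n : ℕ} (v : EuclideanSpace ℝ (Fin n)) :
    ‖v‖ ^ 2 = ∑ j, |v j| ^ 2 := by
  simp only [EuclideanSpace.norm_sq_eq, Real.norm_eq_abs]

lemma l1_le_sqrt_mul_norm {n : ℕ} (v : EuclideanSpace ℝ (Fin n)) :
    l1 v ≤ Real.sqrt n * ‖v‖ := by
  have hsq : l1 v ^ 2 ≤ (Real.sqrt n * ‖v‖) ^ 2 := by
    rw [mul_pow, Real.sq_sqrt n.cast_nonneg, sq_norm_eq_sum_sq_abs]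
    simpa [l1] using sq_sum_le_card_mul_sum_sq (s := Finset.univ) (f := fun j => |v j|)
  exact abs_le_of_sq_le_sq' hsq (by positivity) |>.2

lemma norm_le_l1 {n : ℕ} (v : EuclideanSpace ℝ (Fin n)) : ‖v‖ ≤ l1 v := by
  have hsq : ‖v‖ ^ 2 ≤ l1 v ^ 2 := by
    rw [sq_norm_eq_sum_sq_abs]
    exact Finset.sum_sq_le_sq_sum_of_nonneg fun _ _ => abs_nonneg _
  exact pow_le_pow_iff_left₀ (norm_nonneg v) (Finset.sum_nonneg fun _ _ => abs_nonneg _)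
    two_ne_zero |>.1 hsq

lemma norm_le_one_of_inSimplex {n : ℕ} {w : EuclideanSpace ℝ (Fin n)} (hw : inSimplex w) :
    ‖w‖ ≤ 1 :=
  hw.2 ▸ norm_le_l1 w

lemma inSimplex_single {n : ℕ} (j : Fin n) : inSimplex (EuclideanSpace.single j (1 : ℝ)) := by
  refine ⟨fun i => ?_, ?_⟩
  · by_cases h : i = j <;> simp [h]
  · simp [l1, apply_ite abs, Finset.sum_ite_eq']

lemma one_le_mul_linf_of_inSimplex {n : ℕ} {z : EuclideanSpace ℝ (Fin n)} (hz : inSimplex z) :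
    1 ≤ n * linf z := by
  have hle : ∀ j, |z j| ≤ linf z := le_ciSup (Set.finite_range _).bddAbove
  calc 1 = l1 z := hz.2.symm
    _ ≤ ∑ _j : Fin n, linf z := Finset.sum_le_sum fun j _ => hle j
    _ = n * linf z := by simp

section SimplexMin

variable {n : ℕ} (x : EuclideanSpace ℝ (Fin n))

lemma bddBelow_inner_simplex : BddBelow {t | ∃ w, inSimplex w ∧ t = ⟪x, w⟫} := by
  refine ⟨-‖x‖, ?_⟩
  rintro _ ⟨w, hw, rfl⟩
  calc -‖x‖ ≤ -(‖x‖ * ‖w‖) := by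
        nlinarith [norm_le_one_of_inSimplex hw, norm_nonneg x]
    _ ≤ ⟪x, w⟫ := neg_le_of_abs_le (abs_real_inner_le_norm x w)

lemma sInf_inner_simplex_le_apply (j : Fin n) :
    sInf {t | ∃ w, inSimplex w ∧ t = ⟪x, w⟫} ≤ x j :=
  csInf_le (bddBelow_inner_simplex x)
    ⟨_, inSimplex_single j, by simp [EuclideanSpace.inner_single_right]⟩

end SimplexMin

lemma sqrt_two_mul_mul_le_one_div_two_mul {n : ℕ} (hn : 0 < n) {μ : ℝ} (hμ : μ ≤ 1 / (8 * n ^ 3)) :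
    Real.sqrt (2 * n * μ) ≤ 1 / (2 * n) := by
  have hn' : (0 : ℝ) < n := by exact_mod_cast hn
  refine Real.sqrt_le_iff.2 ⟨by positivity, ?_⟩
  calc 2 * n * μ ≤ 2 * n * (1 / (8 * n ^ 3)) := by gcongr
    _ = (1 / (2 * n)) ^ 2 := by field_simp; ring

theorem basic_procedure_bound_general {n : ℕ} (L : Submodule ℝ (EuclideanSpace ℝ (Fin n)))
    (μ : ℝ) (z u : EuclideanSpace ℝ (Fin n))
    (hz : inSimplex z)
    (hgap : (1 / 2) * ‖proj L z‖ ^ 2 + (1 / 2) * ‖proj L u‖ ^ 2 -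
      sInf {t | ∃ w, inSimplex w ∧ t = ⟪proj L u, w⟫} ≤ μ)
    (hnot : ¬ ∀ j, 0 < proj L u j) :
    l1pos (proj L z) ≤ Real.sqrt n * ‖proj L z‖ ∧
      Real.sqrt n * ‖proj L z‖ ≤ Real.sqrt (2 * n * μ) ∧
      Real.sqrt (2 * n * μ) ≤ n * Real.sqrt (2 * n * μ) * linf z ∧
      (μ ≤ 1 / (8 * n ^ 3) → l1pos (proj L z) ≤ (1 / 2) * linf z) := by
  obtain ⟨j, hj⟩ : ∃ j, proj L u j ≤ 0 := by simpa using hnot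
  have hmin := (sInf_inner_simplex_le_apply (proj L u) j).trans hj
  have hnorm : ‖proj L z‖ ≤ Real.sqrt (2 * μ) :=
    Real.le_sqrt_of_sq_le (by nlinarith [sq_nonneg ‖proj L u‖])
  have hlinf := one_le_mul_linf_of_inSimplex hz
  have hn : 0 < n := Nat.pos_of_ne_zero fun h => by norm_num [h] at hlinf
  have hpos_le := (l1pos_le_l1 _).trans (l1_le_sqrt_mul_norm (proj L z))
  have hnorm_le : Real.sqrt n * ‖proj L z‖ ≤ Real.sqrt (2 * n * μ) := by
    rw [show 2 * (n : ℝ) * μ = n * (2 * μ) by ring, Real.sqrt_mul n.cast_nonneg]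
    gcongr
  refine ⟨hpos_le, hnorm_le, ?_, fun hμ => ?_⟩
  · nlinarith [Real.sqrt_nonneg (2 * n * μ)]
  · calc l1pos (proj L z) ≤ 1 / (2 * n) :=
          hpos_le.trans (hnorm_le.trans (sqrt_two_mul_mul_le_one_div_two_mul hn hμ))
      _ ≤ (1 / 2) * linf z := by
          rw [div_le_iff₀ (by positivity)]
          nlinarith

/-- Termination guarantee of the basic procedure: if `z, u ∈ Δ_{n-1}` satisfy the duality-gap
bound `(1/2)‖Pz‖₂² + (1/2)‖Pu‖₂² − min_{w ∈ Δ_{n-1}} ⟨Pu, w⟩ ≤ μ` and `Pu` is not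
componentwise strictly positive, then
`‖(Pz)⁺‖₁ ≤ √n‖Pz‖₂ ≤ √(2nμ) ≤ n√(2nμ)‖z‖_∞`; in particular, if `μ ≤ 1/(8n³)` then
`‖(Pz)⁺‖₁ ≤ (1/2)‖z‖_∞`. -/
theorem basic_procedure_bound {n : ℕ} (L : Submodule ℝ (EuclideanSpace ℝ (Fin n)))
    (μ : ℝ) (hμ : 0 < μ) (z u : EuclideanSpace ℝ (Fin n))
    (hz : inSimplex z) (hu : inSimplex u)
    (hgap : (1 / 2) * ‖proj L z‖ ^ 2 + (1 / 2) * ‖proj L u‖ ^ 2 -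
      sInf {t | ∃ w, inSimplex w ∧ t = ⟪proj L u, w⟫} ≤ μ)
    (hnot : ¬ ∀ j, 0 < proj L u j) :
    l1pos (proj L z) ≤ Real.sqrt n * ‖proj L z‖ ∧
      Real.sqrt n * ‖proj L z‖ ≤ Real.sqrt (2 * n * μ) ∧
      Real.sqrt (2 * n * μ) ≤ n * Real.sqrt (2 * n * μ) * linf z ∧
      (μ ≤ 1 / (8 * n ^ 3) → l1pos (proj L z) ≤ (1 / 2) * linf z) :=
  basic_procedure_bound_general L μ z u hz hgap hnot

end
end
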